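/- arXiv:2009.11543 — 7 statements merged into one kernel-verified Lean document; each statement's English description precedes it below -/
import Mathlib

section
/- For keys key_0 < key_1 < ... < key_n (as binary strings of equal length, ordered lexicographically), let D_k denote the distinction bit position of key_{k-1} and key_k. Then for all 0 ≤ i < j ≤ n, the distinction bit position of key_i and key_j equals min_{i < k ≤ j} D_k. -/
/-- Lexicographic order on fixed-length bit strings (position 0 most significant). -/
def keyLt {m : ℕ} (x y : Fin m → Bool) : Prop :=
  ∃ i : Fin m, (∀ j : Fin m, j < i → x j = y j) ∧ x i < y i

/-- Distinction bit position: the least position where `x` and `y` differ. -/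
noncomputable def dbit {m : ℕ} (x y : Fin m → Bool) : ℕ :=
  sInf {i : ℕ | ∃ h : i < m, x ⟨i, h⟩ ≠ y ⟨i, h⟩}

lemma dbit_eq_of {m : ℕ} {x y : Fin m → Bool} {d : ℕ} (hm : d < m)
    (hag : ∀ j : Fin m, (j : ℕ) < d → x j = y j)
    (hx : x ⟨d, hm⟩ = false) (hy : y ⟨d, hm⟩ = true) :
    keyLt x y ∧ dbit x y = d := by
  constructor
  · exact ⟨⟨d, hm⟩, fun j hj => hag j hj, by simp [hx, hy]⟩
  · have hmem : d ∈ {i : ℕ | ∃ h : i < m, x ⟨i, h⟩ ≠ y ⟨i, h⟩} := ⟨hm, by simp [hx, hy]⟩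
    have h1 : dbit x y ≤ d := Nat.sInf_le hmem
    have h2 : dbit x y ∈ {i : ℕ | ∃ h : i < m, x ⟨i, h⟩ ≠ y ⟨i, h⟩} :=
      Nat.sInf_mem ⟨d, hmem⟩
    obtain ⟨hm', hne⟩ := h2
    rcases lt_or_eq_of_le h1 with h | h
    · exact absurd (hag ⟨dbit x y, hm'⟩ h) hne
    · exact h

lemma keyLt_spec {m : ℕ} {x y : Fin m → Bool} (h : keyLt x y) :
    ∃ hm : dbit x y < m, (∀ j : Fin m, (j : ℕ) < dbit x y → x j = y j) ∧
      x ⟨dbit x y, hm⟩ = false ∧ y ⟨dbit x y, hm⟩ = true := by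
  obtain ⟨i, hag, hlt⟩ := h
  have hxy : x i = false ∧ y i = true := by
    rcases Bool.lt_iff .. |>.mp hlt with ⟨h1, h2⟩; exact ⟨h1, h2⟩
  have := dbit_eq_of i.isLt (fun j hj => hag j hj) (by simpa using hxy.1) (by simpa using hxy.2)
  rcases this with ⟨_, hd⟩
  simp only [hd]
  exact ⟨i.isLt, fun j hj => hag j hj, by simpa using hxy.1, by simpa using hxy.2⟩

lemma dbit_min {m : ℕ} {x y z : Fin m → Bool} (hxy : keyLt x y) (hyz : keyLt y z) :
    keyLt x z ∧ dbit x z = min (dbit x y) (dbit y z) := by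
  obtain ⟨ha, hag1, hx1, hy1⟩ := keyLt_spec hxy
  obtain ⟨hb, hag2, hy2, hz2⟩ := keyLt_spec hyz
  set a := dbit x y with hA
  set b := dbit y z with hB
  rcases lt_trichotomy a b with h | h | h
  · have := dbit_eq_of ha
      (fun j hj => (hag1 j hj).trans (hag2 j (hj.trans h)))
      hx1 (by rw [← hag2 ⟨a, ha⟩ h]; exact hy1)
    rw [min_eq_left h.le]; exact this
  · exfalso
    have : (⟨a, ha⟩ : Fin m) = ⟨b, hb⟩ := by simp [h]
    rw [this, hy2] at hy1; exact Bool.false_ne_true hy1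
  · have := dbit_eq_of hb
      (fun j hj => (hag1 j (hj.trans h)).trans (hag2 j hj))
      (by rw [hag1 ⟨b, hb⟩ h]; exact hy2) hz2
    rw [min_eq_right h.le]; exact this

/-- For keys key_0 < ... < key_n, the distinction bit position of key_i and key_j
equals the minimum of the adjacent distinction bit positions D_k over i < k ≤ j. -/
theorem dbit_eq_min_adjacent {m n : ℕ} (key : ℕ → Fin m → Bool)
    (hinc : ∀ k < n, keyLt (key k) (key (k + 1))) :
    ∀ i j : ℕ, ∀ hij : i < j, j ≤ n →
      dbit (key i) (key j)
        = (Finset.Ioc i j).inf' (Finset.nonempty_Ioc.mpr hij)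
            (fun k => dbit (key (k - 1)) (key k)) := by
  have main : ∀ j i, ∀ hij : i < j, j ≤ n → keyLt (key i) (key j) ∧
      dbit (key i) (key j)
        = (Finset.Ioc i j).inf' (Finset.nonempty_Ioc.mpr hij)
            (fun k => dbit (key (k - 1)) (key k)) := by
    intro j
    induction j with
    | zero => omega
    | succ j ih =>
      intro i hij hjn
      have hadj : keyLt (key j) (key (j + 1)) := hinc j (by omega)
      rcases Nat.lt_or_ge i j with h | h
      · obtain ⟨hlt, heq⟩ := ih i h (by omega)
        obtain ⟨hlt', heq'⟩ := dbit_min hlt hadj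
        refine ⟨hlt', ?_⟩
        have hIoc : Finset.Ioc i (j + 1) = insert (j + 1) (Finset.Ioc i j) := by
          ext k; simp [Finset.mem_Ioc, Finset.mem_insert]; omega
        rw [heq', heq]
        simp only [hIoc, Finset.inf'_insert (H := Finset.nonempty_Ioc.mpr h), Nat.add_sub_cancel]
        rw [min_comm]
      · have : i = j := by omega
        subst this
        refine ⟨hadj, ?_⟩
        have hIoc : Finset.Ioc i (i + 1) = {i + 1} := by
          exact Nat.Ioc_succ_singleton i
        simp only [hIoc, Finset.inf'_singleton, Nat.add_sub_cancel]
  intro i j hij hjn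
  exact (main j i hij hjn).2
end

section
/- Let S be a set of bit positions containing all distinction bit positions of adjacent keys in a strictly increasing sequence key_0 < ... < key_n, and let Compress(k) be the subsequence of bits of k at positions in S (in increasing position order). Then for all i, j: key_i < key_j if and only if Compress(key_i) < Compress(key_j) in lexicographic order. In particular, Compress is injective on the keys and the sorted order of the compressed keys equals the sorted order of the original keys. -/
/-- The bits of `k` at the positions of `S`, in increasing order of position. -/
noncomputable def compress {m : ℕ} (S : Finset ℕ) (k : Fin m → Bool) : List Bool :=
  (S.sort (· ≤ ·)).map (fun i => if h : i < m then k ⟨i, h⟩ else false)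

/-! `keyLt` is the strict order of `Lex (Fin m → Bool)`, and `List.Lex (· < ·)` that of
`List Bool`. Both orders are linear, and both `i ↦ key i` and `i ↦ compress S (key i)` are
strictly increasing on `[0, n]`: the former by hypothesis, the latter because the first
position where two adjacent keys differ is kept by the compression, while all earlier kept
positions carry equal bits. Two strictly increasing maps on `[0, n]` into linear orders
induce the same order on `[0, n]` and are injective there. -/

theorem List.lex_map_of_pairwise_lt {α β : Type*} [LinearOrder α] {r : β → β → Prop}
    {f g : α → β} {l : List α} (hl : l.Pairwise (· < ·)) {d : α} (hd : d ∈ l)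
    (heq : ∀ a ∈ l, a < d → f a = g a) (hr : r (f d) (g d)) :
    List.Lex r (l.map f) (l.map g) := by
  induction l with
  | nil => cases hd
  | cons a t ih =>
    obtain ⟨ha, ht⟩ := List.pairwise_cons.mp hl
    rcases List.mem_cons.mp hd with rfl | hdt
    · exact .rel hr
    · rw [List.map_cons, List.map_cons, heq a List.mem_cons_self (ha d hdt)]
      exact .cons (ih ht hdt fun b hb => heq b (List.mem_cons_of_mem a hb))

section Keys

variable {m : ℕ} {x y : Fin m → Bool}

theorem dbit_eq {i : Fin m} (hagree : ∀ j < i, x j = y j) (hne : x i ≠ y i) :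
    dbit x y = i := by
  refine le_antisymm (Nat.sInf_le ⟨i.isLt, hne⟩) (le_csInf ⟨i, i.isLt, hne⟩ ?_)
  rintro b ⟨hb, hxy⟩
  by_contra! hbi
  exact hxy (hagree ⟨b, hb⟩ hbi)

theorem compress_lt_of_keyLt (S : Finset ℕ) (hxy : keyLt x y) (hdS : dbit x y ∈ S) :
    compress S x < compress S y := by
  obtain ⟨i, hagree, hlt⟩ := hxy
  rw [dbit_eq hagree hlt.ne] at hdS
  refine List.lex_map_of_pairwise_lt (Finset.sortedLT_sort S).pairwise
    ((Finset.mem_sort _).mpr hdS) (fun a _ hai => ?_) (by simpa using hlt)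
  have ham : a < m := hai.trans i.isLt
  simpa [ham] using hagree ⟨a, ham⟩ hai

end Keys

theorem compress_preserves_order_general {m n : ℕ} (key : ℕ → Fin m → Bool)
    (hinc : ∀ k < n, keyLt (key k) (key (k + 1)))
    (S : Finset ℕ)
    (hS : ∀ k : ℕ, 1 ≤ k → k ≤ n → dbit (key (k - 1)) (key k) ∈ S) :
    (∀ i j : ℕ, i ≤ n → j ≤ n →
        (keyLt (key i) (key j) ↔
          List.Lex (· < ·) (compress S (key i)) (compress S (key j)))) ∧
    (∀ i j : ℕ, i ≤ n → j ≤ n →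
        compress S (key i) = compress S (key j) → key i = key j) := by
  have hkey : StrictMonoOn (fun i => toLex (key i)) (Set.Iic n) :=
    strictMonoOn_Iic_of_lt_succ fun k hk => hinc k hk
  have hcomp : StrictMonoOn (fun i => compress S (key i)) (Set.Iic n) :=
    strictMonoOn_Iic_of_lt_succ fun k hk => by
      simpa using compress_lt_of_keyLt S (hinc k hk) (by simpa using hS (k + 1) (by omega) hk)
  exact ⟨fun i j hi hj => (hkey.lt_iff_lt hi hj).trans (hcomp.lt_iff_lt hi hj).symm,
    fun i j hi hj h => congrArg key (hcomp.injOn hi hj h)⟩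

/-- If `S` contains all adjacent distinction bit positions, then comparing compressed
keys is equivalent to comparing the original keys; in particular the compression is
injective on the keys. -/
theorem compress_preserves_order {m n : ℕ} (key : ℕ → Fin m → Bool)
    (hinc : ∀ k < n, keyLt (key k) (key (k + 1)))
    (S : Finset ℕ) (hSm : ∀ i ∈ S, i < m)
    (hS : ∀ k : ℕ, 1 ≤ k → k ≤ n → dbit (key (k - 1)) (key k) ∈ S) :
    (∀ i j : ℕ, i ≤ n → j ≤ n →
        (keyLt (key i) (key j) ↔
          List.Lex (· < ·) (compress S (key i)) (compress S (key j)))) ∧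
    (∀ i j : ℕ, i ≤ n → j ≤ n →
        compress S (key i) = compress S (key j) → key i = key j) :=
  compress_preserves_order_general key hinc S hS
end

section
/- For a strictly increasing sequence of n+1 keys, the number of distinct distinction bit positions over all pairs of keys is at most n. -/
lemma dbit_comm {m : ℕ} (x y : Fin m → Bool) : dbit x y = dbit y x := by
  unfold dbit
  congr 1
  ext i
  exact ⟨fun ⟨h, hn⟩ => ⟨h, hn.symm⟩, fun ⟨h, hn⟩ => ⟨h, hn.symm⟩⟩

lemma keyLt_dbit {m : ℕ} {x y : Fin m → Bool} (h : keyLt x y) :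
    ∃ hd : dbit x y < m, x ⟨dbit x y, hd⟩ = false ∧ y ⟨dbit x y, hd⟩ = true ∧
      ∀ p (hp : p < m), p < dbit x y → x ⟨p, hp⟩ = y ⟨p, hp⟩ := by
  obtain ⟨i, hagree, hlt⟩ := h
  have hxy : x i = false ∧ y i = true := by
    revert hlt; cases hxi : x i <;> cases hyi : y i <;> simp
  have hiT : (i : ℕ) ∈ {p : ℕ | ∃ h : p < m, x ⟨p, h⟩ ≠ y ⟨p, h⟩} := by
    refine ⟨i.2, ?_⟩
    simp only [Fin.eta]
    rw [hxy.1, hxy.2]; simp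
  have hmem := Nat.sInf_mem ⟨(i : ℕ), hiT⟩
  obtain ⟨hd, hne⟩ := hmem
  have hle : dbit x y ≤ (i : ℕ) := Nat.sInf_le hiT
  have heq : dbit x y = (i : ℕ) := by
    rcases lt_or_eq_of_le hle with hlt' | heq
    · exfalso
      exact hne (hagree ⟨dbit x y, hd⟩ hlt')
    · exact heq
  have hfin : (⟨dbit x y, hd⟩ : Fin m) = i := Fin.ext heq
  refine ⟨hd, ?_, ?_, ?_⟩
  · rw [hfin]; exact hxy.1
  · rw [hfin]; exact hxy.2
  · intro p hp hpd
    have hnT : p ∉ {q : ℕ | ∃ h : q < m, x ⟨q, h⟩ ≠ y ⟨q, h⟩} :=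
      Nat.notMem_of_lt_sInf hpd
    by_contra hcon
    exact hnT ⟨hp, hcon⟩

lemma dbit_pair {m n : ℕ} (key : ℕ → Fin m → Bool)
    (hinc : ∀ k < n, keyLt (key k) (key (k + 1)))
    {i j : ℕ} (hij : i < j) (hj : j ≤ n) :
    ∃ k, i ≤ k ∧ k < j ∧ dbit (key i) (key j) = dbit (key k) (key (k + 1)) := by
  obtain ⟨k, hkmem, hmin⟩ := (Finset.Ico i j).exists_min_image
    (fun k => dbit (key k) (key (k + 1))) ⟨i, Finset.mem_Ico.mpr ⟨le_rfl, hij⟩⟩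
  rw [Finset.mem_Ico] at hkmem
  set d := dbit (key k) (key (k + 1)) with hd
  obtain ⟨hdm, hkd, hk1d, _⟩ := keyLt_dbit (hinc k (lt_of_lt_of_le hkmem.2 hj))
  have hminle : ∀ l, i ≤ l → l < j → d ≤ dbit (key l) (key (l + 1)) := by
    intro l hil hlj
    exact hmin l (Finset.mem_Ico.mpr ⟨hil, hlj⟩)
  -- adjacent pairs agree below d
  have hadj : ∀ l, i ≤ l → l < j → ∀ p (hp : p < m), p < d →
      key l ⟨p, hp⟩ = key (l + 1) ⟨p, hp⟩ := by
    intro l hil hlj p hp hpd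
    obtain ⟨_, _, _, hag⟩ := keyLt_dbit (hinc l (lt_of_lt_of_le hlj hj))
    exact hag p hp (lt_of_lt_of_le hpd (hminle l hil hlj))
  -- step lemma at position d
  have step : ∀ l, i ≤ l → l < j →
      (key (l + 1) ⟨d, hdm⟩ = false → key l ⟨d, hdm⟩ = false) ∧
      (key l ⟨d, hdm⟩ = true → key (l + 1) ⟨d, hdm⟩ = true) := by
    intro l hil hlj
    obtain ⟨hdm', hf, ht, _⟩ := keyLt_dbit (hinc l (lt_of_lt_of_le hlj hj))
    rcases lt_or_eq_of_le (hminle l hil hlj) with hlt | heq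
    · obtain ⟨_, _, _, hag⟩ := keyLt_dbit (hinc l (lt_of_lt_of_le hlj hj))
      have := hag d hdm hlt
      constructor <;> intro h <;> rw [this] at * <;> assumption
    · have h1 : key l ⟨d, hdm⟩ = false := by
        have : (⟨d, hdm⟩ : Fin m) = ⟨dbit (key l) (key (l+1)), hdm'⟩ := Fin.ext heq
        rw [this]; exact hf
      have h2 : key (l + 1) ⟨d, hdm⟩ = true := by
        have : (⟨d, hdm⟩ : Fin m) = ⟨dbit (key l) (key (l+1)), hdm'⟩ := Fin.ext heq
        rw [this]; exact ht
      exact ⟨fun _ => h1, fun _ => h2⟩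
  -- downward: all l in [i,k] have value false at d
  have down : ∀ t, ∀ l, l + t = k → i ≤ l → key l ⟨d, hdm⟩ = false := by
    intro t
    induction t with
    | zero =>
      intro l hl _
      have : l = k := by omega
      subst this; exact hkd
    | succ t ih =>
      intro l hl hil
      have h1 : key (l + 1) ⟨d, hdm⟩ = false := ih (l + 1) (by omega) (by omega)
      exact (step l hil (by omega)).1 h1
  -- upward: all l in [k+1,j] have value true at d
  have up : ∀ l, k + 1 ≤ l → l ≤ j → key l ⟨d, hdm⟩ = true := by
    intro l hl
    induction l, hl using Nat.le_induction with
    | base => intro _; exact hk1d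
    | succ l hl ih =>
      intro hlj
      exact (step l (by omega) (by omega)).2 (ih (by omega))
  have hif : key i ⟨d, hdm⟩ = false := down (k - i) i (by omega) le_rfl
  have hjt : key j ⟨d, hdm⟩ = true := up j (by omega) le_rfl
  -- agreement of key i and key j below d
  have agreeUp : ∀ l, i ≤ l → l ≤ j → ∀ p (hp : p < m), p < d →
      key i ⟨p, hp⟩ = key l ⟨p, hp⟩ := by
    intro l hl
    induction l, hl using Nat.le_induction with
    | base => intro _ p hp hpd; rfl
    | succ l hl ih =>
      intro hlj p hp hpd
      exact (ih (by omega) p hp hpd).trans (hadj l (by omega) (by omega) p hp hpd)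
  -- now compute dbit (key i) (key j)
  refine ⟨k, hkmem.1, hkmem.2, ?_⟩
  have hdT : d ∈ {p : ℕ | ∃ h : p < m, key i ⟨p, h⟩ ≠ key j ⟨p, h⟩} := by
    refine ⟨hdm, ?_⟩
    rw [hif, hjt]; simp
  apply le_antisymm
  · exact Nat.sInf_le hdT
  · apply le_csInf ⟨d, hdT⟩
    intro p hp
    obtain ⟨hpm, hne⟩ := hp
    by_contra hcon
    push_neg at hcon
    exact hne (agreeUp j (by omega) le_rfl p hpm hcon)

/-- For a strictly increasing sequence of n+1 keys, there are at most n distinct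
distinction bit positions over all pairs of keys. -/
theorem card_dbit_le {m n : ℕ} (key : ℕ → Fin m → Bool)
    (hinc : ∀ k < n, keyLt (key k) (key (k + 1))) :
    {d : ℕ | ∃ i j : ℕ, i ≤ n ∧ j ≤ n ∧ i ≠ j ∧ d = dbit (key i) (key j)}.Finite ∧
    {d : ℕ | ∃ i j : ℕ, i ≤ n ∧ j ≤ n ∧ i ≠ j ∧ d = dbit (key i) (key j)}.ncard ≤ n := by
  set F : Finset ℕ := (Finset.range n).image (fun k => dbit (key k) (key (k + 1))) with hF
  have hsub : {d : ℕ | ∃ i j : ℕ, i ≤ n ∧ j ≤ n ∧ i ≠ j ∧ d = dbit (key i) (key j)} ⊆ ↑F := by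
    rintro d ⟨i, j, hi, hj, hne, hd⟩
    rcases lt_or_gt_of_ne hne with hij | hij
    · obtain ⟨k, _, hkj, hdk⟩ := dbit_pair key hinc hij hj
      exact Finset.mem_coe.mpr (Finset.mem_image.mpr
        ⟨k, Finset.mem_range.mpr (by omega), by rw [hd, hdk]⟩)
    · obtain ⟨k, _, hkj, hdk⟩ := dbit_pair key hinc hij hi
      refine Finset.mem_coe.mpr (Finset.mem_image.mpr
        ⟨k, Finset.mem_range.mpr (by omega), ?_⟩)
      rw [hd, dbit_comm (key i) (key j), hdk]
  have hfin : {d : ℕ | ∃ i j : ℕ, i ≤ n ∧ j ≤ n ∧ i ≠ j ∧ d = dbit (key i) (key j)}.Finite :=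
    Set.Finite.subset F.finite_toSet hsub
  refine ⟨hfin, ?_⟩
  calc {d : ℕ | ∃ i j : ℕ, i ≤ n ∧ j ≤ n ∧ i ≠ j ∧ d = dbit (key i) (key j)}.ncard
      ≤ (↑F : Set ℕ).ncard := Set.ncard_le_ncard hsub F.finite_toSet
    _ = F.card := Set.ncard_coe_finset F
    _ ≤ (Finset.range n).card := Finset.card_image_le
    _ = n := Finset.card_range n
end

section
/- If A < K < B are keys, then D-bit(A,K) ≠ D-bit(K,B). -/
lemma dbit_eq_of_eqOn_lt {m : ℕ} {x y : Fin m → Bool} (i : Fin m)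
    (h_eq : ∀ j : Fin m, j < i → x j = y j) (h_ne : x i ≠ y i) :
    dbit x y = i := by
  refine le_antisymm (Nat.sInf_le ⟨i.isLt, h_ne⟩) (le_csInf ⟨i, i.isLt, h_ne⟩ ?_)
  rintro n ⟨hn, hne⟩
  by_contra! hlt
  exact hne (h_eq ⟨n, hn⟩ hlt)

lemma Bool.not_lt_lt {a b c : Bool} (hab : a < b) (hbc : b < c) : False := by
  revert a b c; decide

/-- If A < K < B, the two adjacent distinction bit positions around K differ. -/
theorem dbit_ne {m : ℕ} (A K B : Fin m → Bool)
    (hAK : keyLt A K) (hKB : keyLt K B) :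
    dbit A K ≠ dbit K B := by
  obtain ⟨i, hAK_eq, hAK_lt⟩ := hAK
  obtain ⟨j, hKB_eq, hKB_lt⟩ := hKB
  rw [dbit_eq_of_eqOn_lt i hAK_eq hAK_lt.ne, dbit_eq_of_eqOn_lt j hKB_eq hKB_lt.ne]
  intro hij
  obtain rfl : i = j := Fin.ext hij
  exact Bool.not_lt_lt hAK_lt hKB_lt
end

section
/- In a perfect p-partition of sorted blocks: given tp sorted lists B_1,...,B_{tp} whose multiset union has n elements with p ∣ n, there exist split points partitioning each B_i into p consecutive (possibly empty) segments B_i = B_i^1 ++ ... ++ B_i^p such that for each 1 ≤ j ≤ p the multiset union of {B_i^j : 1 ≤ i ≤ tp} has exactly n/p elements, and every element of ∪_i B_i^j is ≤ every element of ∪_i B_i^{j'} for j < j'. -/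
/-!
An `x`-split is built one element at a time: move into the prefixes the smallest element still
in a suffix, which sits at the head of some suffix because the blocks are sorted; this keeps every
prefix element `≤` every suffix element. Taking an `n / p`-split as the first segments and
recursing on the suffixes, whose total length is `(p - 1) * (n / p)`, produces the `p` segments.
-/

open Finset

theorem List.Pairwise.getElem_le_of_mem_drop {β : Type*} [Preorder β] {l : List β}
    (hl : l.Pairwise (· ≤ ·)) {k : ℕ} (hk : k < l.length) {b : β} (hb : b ∈ l.drop k) :
    l[k] ≤ b := by
  have hs := hl.sublist (l.drop_sublist k)
  rw [List.drop_eq_getElem_cons hk] at hb hs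
  rcases List.mem_cons.mp hb with rfl | hb
  · exact le_rfl
  · exact List.rel_of_pairwise_cons hs hb

section Split

variable {α : Type*} [LinearOrder α] {N : ℕ} {B : Fin N → List α} {c : Fin N → ℕ}

/-- The paper's `x`-split with prefix lengths `c`, where `x = ∑ i, c i`. -/
structure IsSplit (B : Fin N → List α) (c : Fin N → ℕ) : Prop where
  le_length : ∀ i, c i ≤ (B i).length
  le_of_mem : ∀ i i', ∀ a ∈ (B i).take (c i), ∀ b ∈ (B i').drop (c i'), a ≤ b

theorem isSplit_zero (B : Fin N → List α) : IsSplit B 0 :=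
  ⟨fun _ => Nat.zero_le _, by simp⟩

theorem exists_getElem_le_of_mem_drop (hB : ∀ i, (B i).Pairwise (· ≤ ·))
    (hlt : ∑ i, c i < ∑ i, (B i).length) :
    ∃ i₀, ∃ hi₀ : c i₀ < (B i₀).length, ∀ i, ∀ b ∈ (B i).drop (c i), (B i₀)[c i₀] ≤ b := by
  set R := univ.biUnion fun i => ((B i).drop (c i)).toFinset
  have hR : R.Nonempty := by
    obtain ⟨i, -, hi⟩ := exists_lt_of_sum_lt hlt
    refine ⟨(B i)[c i], mem_biUnion.2 ⟨i, mem_univ _, List.mem_toFinset.2 ?_⟩⟩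
    rw [List.drop_eq_getElem_cons hi]
    exact List.mem_cons_self
  obtain ⟨i₀, -, hmin⟩ := mem_biUnion.1 (R.min'_mem hR)
  rw [List.mem_toFinset] at hmin
  have hi₀ : c i₀ < (B i₀).length := by
    by_contra h
    simp [List.drop_eq_nil_of_le (not_lt.1 h)] at hmin
  refine ⟨i₀, hi₀, fun i b hb => ?_⟩
  calc (B i₀)[c i₀] ≤ R.min' hR := (hB i₀).getElem_le_of_mem_drop hi₀ hmin
    _ ≤ b := R.min'_le b (mem_biUnion.2 ⟨i, mem_univ _, List.mem_toFinset.2 hb⟩)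

theorem IsSplit.exists_add_single (hB : ∀ i, (B i).Pairwise (· ≤ ·)) (hc : IsSplit B c)
    (hlt : ∑ i, c i < ∑ i, (B i).length) : ∃ i₀, IsSplit B (c + Pi.single i₀ 1) := by
  obtain ⟨i₀, hi₀, hhead⟩ := exists_getElem_le_of_mem_drop hB hlt
  refine ⟨i₀, ⟨fun i => ?_, fun i i' a ha b hb => ?_⟩⟩
  · rcases eq_or_ne i i₀ with rfl | hne
    · simpa using hi₀
    · simpa [Pi.single_eq_of_ne hne] using hc.le_length i
  replace hb : b ∈ (B i').drop (c i') :=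
    (List.drop_sublist_drop_left _ (Nat.le_add_right _ _)).subset hb
  rcases eq_or_ne i i₀ with rfl | hne
  · rw [Pi.add_apply, Pi.single_eq_same, List.take_add_one, List.getElem?_eq_getElem hi₀] at ha
    rcases List.mem_append.1 ha with ha | ha
    · exact hc.le_of_mem i i' a ha b hb
    · rw [List.mem_singleton.1 ha]
      exact hhead i' b hb
  · rw [Pi.add_apply, Pi.single_eq_of_ne hne, add_zero] at ha
    exact hc.le_of_mem i i' a ha b hb

theorem exists_isSplit (hB : ∀ i, (B i).Pairwise (· ≤ ·)) {x : ℕ}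
    (hx : x ≤ ∑ i, (B i).length) : ∃ c, IsSplit B c ∧ ∑ i, c i = x := by
  induction x with
  | zero => exact ⟨0, isSplit_zero B, by simp⟩
  | succ x ih =>
    obtain ⟨c, hc, rfl⟩ := ih (by omega)
    obtain ⟨i₀, hc'⟩ := hc.exists_add_single hB (by omega)
    exact ⟨_, hc', by simp [sum_add_distrib]⟩

theorem exists_ordered_segments (hB : ∀ i, (B i).Pairwise (· ≤ ·)) (p m : ℕ)
    (hBm : ∑ i, (B i).length = p * m) :
    ∃ seg : Fin N → Fin p → List α,
      (∀ i, B i = (List.ofFn (seg i)).flatten) ∧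
      (∀ j, ∑ i, (seg i j).length = m) ∧
      (∀ j j' : Fin p, j < j' → ∀ i i', ∀ x ∈ seg i j, ∀ y ∈ seg i' j', x ≤ y) := by
  induction p generalizing B with
  | zero =>
    have hnil : ∀ i, B i = [] := fun i =>
      List.length_eq_zero_iff.1 (sum_eq_zero_iff.1 (by rw [hBm, zero_mul]) i (mem_univ _))
    exact ⟨fun _ => Fin.elim0, fun i => by simp [hnil i], fun j => j.elim0, fun j => j.elim0⟩
  | succ p ih =>
    obtain ⟨c, hc, hcm⟩ :=
      exists_isSplit hB (x := m) (by rw [hBm]; exact Nat.le_mul_of_pos_left m p.succ_pos)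
    have hrest : ∑ i, ((B i).drop (c i)).length = p * m := by
      simp only [List.length_drop]
      rw [sum_tsub_distrib _ fun i _ => hc.le_length i, hBm, hcm, Nat.succ_mul, Nat.add_sub_cancel]
    obtain ⟨seg, hflat, hlen, hord⟩ :=
      ih (fun i => (hB i).sublist (List.drop_sublist _ _)) hrest
    refine ⟨fun i => Fin.cons ((B i).take (c i)) (seg i), fun i => ?_,
      Fin.cases (by simp [min_eq_left (hc.le_length _), hcm]) (by simpa using hlen), ?_⟩
    · simp [List.ofFn_succ, ← hflat]
    intro j j' hjj' i i' x hx y hy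
    cases j' using Fin.cases with
    | zero => exact absurd hjj' (Fin.not_lt_zero j)
    | succ k' =>
      simp only [Fin.cons_succ] at hy
      cases j using Fin.cases with
      | zero =>
        replace hy : y ∈ (B i').drop (c i') := by
          rw [hflat i']
          exact List.mem_flatten_of_mem (List.mem_ofFn.2 ⟨k', rfl⟩) hy
        exact hc.le_of_mem i i' x hx y hy
      | succ k => exact hord k k' (Fin.succ_lt_succ_iff.1 hjj') i i' x hx y hy

end Split

theorem perfect_partition_general {α : Type*} [LinearOrder α] {N p n : ℕ}
    (B : Fin N → List α) (hsorted : ∀ i, (B i).Pairwise (· ≤ ·))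
    (hn : ∑ i, (B i).length = n) (hdvd : p ∣ n) :
    ∃ seg : Fin N → Fin p → List α,
      (∀ i, B i = (List.ofFn (seg i)).flatten) ∧
      (∀ j : Fin p, ∑ i, (seg i j).length = n / p) ∧
      (∀ j j' : Fin p, j < j' → ∀ i i' : Fin N,
        ∀ x ∈ seg i j, ∀ y ∈ seg i' j', x ≤ y) :=
  exists_ordered_segments hsorted p (n / p) (by rw [hn, Nat.mul_div_cancel' hdvd])

/-- Perfect p-partition: given sorted blocks B_1, ..., B_N whose total length n is
divisible by p, each block can be split into p consecutive segments so that the j-th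
segments together contain exactly n/p elements, and every element of the j-th
segments is ≤ every element of the j'-th segments for j < j'. -/
theorem perfect_partition {α : Type*} [LinearOrder α] {N p n : ℕ} (hp : 0 < p)
    (B : Fin N → List α) (hsorted : ∀ i, (B i).Pairwise (· ≤ ·))
    (hn : ∑ i, (B i).length = n) (hdvd : p ∣ n) :
    ∃ seg : Fin N → Fin p → List α,
      (∀ i, B i = (List.ofFn (seg i)).flatten) ∧
      (∀ j : Fin p, ∑ i, (seg i j).length = n / p) ∧
      (∀ j j' : Fin p, j < j' → ∀ i i' : Fin N,
        ∀ x ∈ seg i j, ∀ y ∈ seg i' j', x ≤ y) :=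
  perfect_partition_general B hsorted hn hdvd
end

section
/- If key_0 < ... < key_n and S is the exact set of adjacent distinction bit positions {D-bit(key_{k-1}, key_k)}, then restricting each key to S yields a strictly increasing sequence of compressed keys, and moreover for each adjacent pair the position of the first difference of the compressed keys, when mapped back via the increasing enumeration of S (the D-offset array), recovers the original distinction bit position: D-offset[D-bit(Compress(key_{i}), Compress(key_{i+1}))] = D-bit(key_i, key_{i+1}). -/
/-- The first differing position of two lists. -/
noncomputable def firstDiff {α : Type*} (a b : List α) : ℕ :=
  sInf {i : ℕ | a[i]? ≠ b[i]?}

lemma dbit_eq_of_first_diff {m : ℕ} {x y : Fin m → Bool} {i : Fin m}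
    (hpre : ∀ j < i, x j = y j) (hne : x i ≠ y i) : dbit x y = i :=
  IsLeast.csInf_eq ⟨⟨i.isLt, hne⟩, fun _ ⟨hj, hne'⟩ =>
    not_lt.1 fun hlt => hne' (hpre ⟨_, hj⟩ hlt)⟩

lemma keyLt.exists_dbit_eq {m : ℕ} {x y : Fin m → Bool} (h : keyLt x y) :
    ∃ i : Fin m, dbit x y = i ∧ (∀ j < i, x j = y j) ∧ x i = false ∧ y i = true := by
  obtain ⟨i, hpre, hlt⟩ := h
  obtain ⟨hx, hy⟩ := Bool.lt_iff.1 hlt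
  exact ⟨i, dbit_eq_of_first_diff hpre (by simp [hx, hy]), hpre, hx, hy⟩

lemma firstDiff_eq_of_getElem? {α : Type*} {a b : List α} {k : ℕ}
    (hpre : ∀ j < k, a[j]? = b[j]?) (hk : a[k]? ≠ b[k]?) : firstDiff a b = k :=
  IsLeast.csInf_eq ⟨hk, fun _ hj => not_lt.1 fun hlt => hj (hpre _ hlt)⟩

lemma List.lex_of_getElem?_eq {α : Type*} {r : α → α → Prop} {p q : α} (hr : r p q) :
    ∀ {a b : List α} {k : ℕ}, (∀ j < k, a[j]? = b[j]?) → a[k]? = some p → b[k]? = some q →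
      List.Lex r a b
  | _ :: _, _ :: _, 0, _, ha, hb => by
    simp only [List.getElem?_cons_zero, Option.some.injEq] at ha hb
    exact ha ▸ hb ▸ List.Lex.rel hr
  | c :: _, d :: _, k + 1, hpre, ha, hb => by
    obtain rfl : c = d := by simpa using hpre 0 k.succ_pos
    exact List.Lex.cons (List.lex_of_getElem?_eq hr
      (fun j hj => by simpa using hpre (j + 1) (by omega)) ha hb)

lemma List.getElem?_map_eq_of_lt_of_sortedLT {α β : Type*} [Preorder α] {L : List α}
    {f g : α → β} {k : ℕ} {d : α} (hL : L.SortedLT) (hk : L[k]? = some d)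
    (hfg : ∀ a < d, f a = g a) : ∀ j < k, (L.map f)[j]? = (L.map g)[j]? := by
  intro j hj
  obtain ⟨hkL, rfl⟩ := List.getElem?_eq_some_iff.1 hk
  have hjL : j < L.length := hj.trans hkL
  have hlt : L[j] < L[k] := hL.strictMono_get (show (⟨j, hjL⟩ : Fin _) < ⟨k, hkL⟩ from hj)
  simp [List.getElem?_eq_getElem hjL, hfg _ hlt]

theorem compress_lex_and_getElem?_firstDiff {m : ℕ} {x y : Fin m → Bool} (h : keyLt x y)
    {S : Finset ℕ} (hS : dbit x y ∈ S) :
    List.Lex (· < ·) (compress S x) (compress S y) ∧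
      (S.sort (· ≤ ·))[firstDiff (compress S x) (compress S y)]? = some (dbit x y) := by
  obtain ⟨i, hd, hpre, hx, hy⟩ := h.exists_dbit_eq
  obtain ⟨k, hk⟩ := List.getElem?_of_mem ((S.mem_sort (· ≤ ·)).2 hS)
  have hagree : ∀ j < k, (compress S x)[j]? = (compress S y)[j]? :=
    List.getElem?_map_eq_of_lt_of_sortedLT S.sortedLT_sort hk fun a ha => by
      split_ifs with ham
      · exact hpre ⟨a, ham⟩ (by rwa [hd] at ha)
      · rfl
  have hxk : (compress S x)[k]? = some false := by simp [compress, hk, hd, hx]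
  have hyk : (compress S y)[k]? = some true := by simp [compress, hk, hd, hy]
  refine ⟨List.lex_of_getElem?_eq Bool.false_lt_true hagree hxk hyk, ?_⟩
  rw [firstDiff_eq_of_getElem? hagree (by simp [hxk, hyk]), hk]

/-- If S is the exact set of adjacent distinction bit positions, the compressed keys
are strictly increasing, and the D-offset array (the increasing enumeration of S)
maps the first differing position of adjacent compressed keys back to the original
distinction bit position. -/
theorem doffset_recovers_dbit {m n : ℕ} (key : ℕ → Fin m → Bool)
    (hinc : ∀ k < n, keyLt (key k) (key (k + 1)))
    (S : Finset ℕ)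
    (hS : (S : Set ℕ)
      = {d : ℕ | ∃ k : ℕ, 1 ≤ k ∧ k ≤ n ∧ d = dbit (key (k - 1)) (key k)}) :
    (∀ k : ℕ, 1 ≤ k → k ≤ n →
      List.Lex (· < ·) (compress S (key (k - 1))) (compress S (key k))) ∧
    (∀ i : ℕ, i < n →
      (S.sort (· ≤ ·))[firstDiff (compress S (key i)) (compress S (key (i + 1)))]?
        = some (dbit (key i) (key (i + 1)))) := by
  have hdbit_mem : ∀ i < n, dbit (key i) (key (i + 1)) ∈ S := fun i hi => by
    rw [← Finset.mem_coe, hS]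
    exact ⟨i + 1, by omega, by omega, rfl⟩
  have hpair := fun i hi => compress_lex_and_getElem?_firstDiff (hinc i hi) (hdbit_mem i hi)
  refine ⟨fun k hk1 hkn => ?_, fun i hi => (hpair i hi).2⟩
  obtain ⟨i, rfl⟩ := Nat.exists_eq_add_of_le' hk1
  exact (hpair i (by omega)).1
end

section
/- More generally, for any i < j in a strictly increasing sequence of keys, if S contains all adjacent distinction bit positions, then D-offset[D-bit(Compress(key_i), Compress(key_j))] = D-bit(key_i, key_j). -/
/-! The distinction bit of `key i` and `key j` is the minimum of the adjacent distinction bits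
between them, hence lies in `S`. The two keys agree below it, so their compressions agree at
every entry of `S` below it and differ at the entry it occupies in the sorted enumeration of
`S`: the first difference of the compressed keys is exactly the index of that distinction bit. -/

section DistinctionBit

variable {m : ℕ} {x y z : Fin m → Bool}

lemma dbit_eq_of_agree_lt {i : Fin m} (hne : x i ≠ y i) (hagree : ∀ j < i, x j = y j) :
    dbit x y = i :=
  IsLeast.csInf_eq
    ⟨⟨i.isLt, hne⟩, fun _ ⟨hq, hne'⟩ => not_lt.1 fun hlt => hne' (hagree ⟨_, hq⟩ hlt)⟩

lemma keyLt.exists_dbit (h : keyLt x y) :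
    ∃ i : Fin m, dbit x y = i ∧ x i = false ∧ y i = true ∧ ∀ j < i, x j = y j := by
  obtain ⟨i, hagree, hlt⟩ := h
  obtain ⟨hx, hy⟩ : x i = false ∧ y i = true := by
    revert hlt; cases x i <;> cases y i <;> decide
  exact ⟨i, dbit_eq_of_agree_lt (by simp [hx, hy]) hagree, hx, hy, hagree⟩

lemma keyLt.trans_dbit (hxy : keyLt x y) (hyz : keyLt y z) :
    keyLt x z ∧ dbit x z = min (dbit x y) (dbit y z) := by
  obtain ⟨i, hi, hxi, hyi, hagree_xy⟩ := hxy.exists_dbit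
  obtain ⟨j, hj, hyj, hzj, hagree_yz⟩ := hyz.exists_dbit
  have hagree : ∀ k < min i j, x k = z k := fun k hk =>
    (hagree_xy k (lt_min_iff.1 hk).1).trans (hagree_yz k (lt_min_iff.1 hk).2)
  have hx : x (min i j) = false := by
    rcases le_total i j with hij | hji
    · rwa [min_eq_left hij]
    · rw [min_eq_right hji, hagree_xy j (hji.lt_of_ne fun h => by simp [← h, hyj] at hyi)]
      exact hyj
  have hz : z (min i j) = true := by
    rcases le_total j i with hji | hij
    · rwa [min_eq_right hji]
    · rw [min_eq_left hij, ← hagree_yz i (hij.lt_of_ne fun h => by simp [h, hyj] at hyi)]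
      exact hyi
  refine ⟨⟨min i j, hagree, by simp [hx, hz]⟩, ?_⟩
  rw [dbit_eq_of_agree_lt (by simp [hx, hz]) hagree, hi, hj, Fin.coe_min]

lemma keyLt_and_dbit_mem_of_chain {key : ℕ → Fin m → Bool} {n : ℕ} {S : Set ℕ}
    (hinc : ∀ k < n, keyLt (key k) (key (k + 1)))
    (hS : ∀ k < n, dbit (key k) (key (k + 1)) ∈ S) {i j : ℕ} (hij : i < j) (hjn : j ≤ n) :
    keyLt (key i) (key j) ∧ dbit (key i) (key j) ∈ S := by
  induction j, hij using Nat.le_induction with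
  | base => exact ⟨hinc i hjn, hS i hjn⟩
  | succ j _ ih =>
    obtain ⟨hlt, hmem⟩ := ih (by omega)
    obtain ⟨hlt', hdbit⟩ := hlt.trans_dbit (hinc j hjn)
    exact ⟨hlt', hdbit ▸ min_rec' (· ∈ S) hmem (hS j hjn)⟩

end DistinctionBit

section FirstDiff

variable {α : Type*}

lemma firstDiff_eq_of_agree_lt {a b : List α} {t : ℕ} (hne : a[t]? ≠ b[t]?)
    (hagree : ∀ s < t, a[s]? = b[s]?) : firstDiff a b = t :=
  IsLeast.csInf_eq ⟨hne, fun _ hs => not_lt.1 fun hlt => hs (hagree _ hlt)⟩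

lemma firstDiff_map_of_sortedLT {l : List ℕ} (hl : l.SortedLT) {f g : ℕ → α} {t : ℕ}
    (ht : t < l.length) (hne : f l[t] ≠ g l[t]) (hagree : ∀ q < l[t], f q = g q) :
    firstDiff (l.map f) (l.map g) = t := by
  refine firstDiff_eq_of_agree_lt (by simpa [ht] using hne) fun s hst => ?_
  have hs : s < l.length := hst.trans ht
  simp [List.getElem?_eq_getElem hs, hagree _ (hl.getElem_lt_getElem_iff.2 hst)]

end FirstDiff

/-- For any i < j, if S contains all adjacent distinction bit positions, the
D-offset array maps the first differing position of the compressed keys back to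
the original distinction bit position of key_i and key_j. -/
theorem doffset_recovers_dbit_pairs {m n : ℕ} (key : ℕ → Fin m → Bool)
    (hinc : ∀ k < n, keyLt (key k) (key (k + 1)))
    (S : Finset ℕ)
    (hS : ∀ k : ℕ, 1 ≤ k → k ≤ n → dbit (key (k - 1)) (key k) ∈ S) :
    ∀ i j : ℕ, i < j → j ≤ n →
      (S.sort (· ≤ ·))[firstDiff (compress S (key i)) (compress S (key j))]?
        = some (dbit (key i) (key j)) := by
  intro i j hij hjn
  obtain ⟨hlt, hmem⟩ := keyLt_and_dbit_mem_of_chain (S := (S : Set ℕ)) hinc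
    (fun k hk => by simpa using hS (k + 1) (by omega) (by omega)) hij hjn
  obtain ⟨p, hp, hxp, hyp, hagree⟩ := hlt.exists_dbit
  obtain ⟨t, ht, htp⟩ := List.mem_iff_getElem.1 ((S.mem_sort (· ≤ ·)).2 (hp ▸ hmem))
  have hfirst : firstDiff (compress S (key i)) (compress S (key j)) = t := by
    refine firstDiff_map_of_sortedLT S.sortedLT_sort ht (by simp [htp, hxp, hyp]) ?_
    intro q hq
    rw [htp] at hq
    have hqm : q < m := hq.trans p.isLt
    simp only [dif_pos hqm]
    exact hagree ⟨q, hqm⟩ hq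
  rw [hfirst, List.getElem?_eq_getElem ht, htp, hp]
end
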